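/- arXiv:2105.04917 — 3 statements merged into one kernel-verified Lean document; each statement's English description precedes it below -/
import Mathlib

section
/- For any finite system of events (A_i)_{i∈[d]} with nonzero probabilities, any graph D on [d] with closed neighbourhoods D_i, and any φ ≥ 0 such that P(⋃_{j∈[i-1]\D_i} A_j | A_i) − P(⋃_{j∈[i-1]\D_i} A_j) ≤ φ for all i ∈ [d], we have P(⋂_{i∈[d]} Ā_i) ≤ ∏_{i∈[d]} P(Ā_i) + φ(1 − ∏_{i∈[d]} P(Ā_i)) + Δ₁, where Δ₁ = Σ_{i∈[d]} P(A_i ∩ ⋃_{j∈[i-1]∩D_i} A_j) ∏_{k∈[d]\[i]} P(Ā_k). -/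
/-!
Let `Cᵢ = ⋂_{j<i} Aⱼᶜ`. Splitting `Cᵢᶜ = ⋃_{j<i} Aⱼ` into the events `U` outside `Dᵢ` and `V`
inside `Dᵢ`, the mixing hypothesis gives `P(U ∩ Aᵢ) ≤ (P(U) + φ) P(Aᵢ)`, and since `U ⊆ Cᵢᶜ` this
yields the one-step bound `P(Cᵢ ∩ Aᵢᶜ) ≤ P(Cᵢ) P(Aᵢᶜ) + φ P(Aᵢ) + P(Aᵢ ∩ V)`. Iterating it over
`i` produces the product, the `φ (1 - ∏)` term (it telescopes, as `P(Aᵢ) = 1 - P(Aᵢᶜ)`) and `Δ₁`.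
-/

open MeasureTheory Finset

namespace MeasureTheory

variable {Ω : Type*} [MeasurableSpace Ω] {μ : Measure Ω}

lemma measureReal_inter_le_of_div_sub_le [IsFiniteMeasure μ] {U A : Set Ω} {φ : ℝ}
    (h : μ.real (U ∩ A) / μ.real A - μ.real U ≤ φ) :
    μ.real (U ∩ A) ≤ (μ.real U + φ) * μ.real A := by
  rcases (measureReal_nonneg (μ := μ) (s := A)).eq_or_lt with hA | hA
  · rw [← hA, mul_zero]
    exact (measureReal_mono Set.inter_subset_right).trans_eq hA.symm
  · have := (div_le_iff₀ hA).1 (sub_le_iff_le_add.1 h)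
    linarith

lemma measureReal_inter_compl_le [IsProbabilityMeasure μ] {A C U V : Set Ω} {φ : ℝ}
    (hA : MeasurableSet A) (hC : MeasurableSet C) (hUV : Cᶜ = U ∪ V)
    (hmix : μ.real (U ∩ A) ≤ (μ.real U + φ) * μ.real A) :
    μ.real (C ∩ Aᶜ) ≤ μ.real C * μ.real Aᶜ + φ * μ.real A + μ.real (A ∩ V) := by
  have hCA : μ.real (C ∩ A) + μ.real (C \ A) = μ.real C := measureReal_inter_add_sdiff hA
  have hAC : μ.real (A ∩ C) + μ.real (A \ C) = μ.real A := measureReal_inter_add_sdiff hC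
  have hAC_le : μ.real (A \ C) ≤ μ.real (U ∩ A) + μ.real (A ∩ V) := by
    refine (measureReal_mono fun x hx => ?_).trans (measureReal_union_le _ _)
    have hx' : x ∈ Cᶜ := hx.2
    rcases hUV ▸ hx' with hU | hV
    exacts [Or.inl ⟨hU, hx.1⟩, Or.inr ⟨hx.1, hV⟩]
  have hU : μ.real U ≤ 1 - μ.real C := by
    rw [← probReal_compl_eq_one_sub hC, hUV]
    exact measureReal_mono Set.subset_union_left
  rw [Set.inter_comm] at hAC
  rw [← Set.sdiff_eq, probReal_compl_eq_one_sub hA]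
  linarith [mul_le_mul_of_nonneg_right hU (measureReal_nonneg : 0 ≤ μ.real A)]

theorem measureReal_biInter_compl_le [IsProbabilityMeasure μ] {ι : Type*} [LinearOrder ι]
    {A U V : ι → Set Ω} {φ : ℝ} (hA : ∀ i, MeasurableSet (A i))
    (hUV : ∀ i, ⋃ j < i, A j = U i ∪ V i)
    (hmix : ∀ i, μ.real (U i ∩ A i) ≤ (μ.real (U i) + φ) * μ.real (A i))
    (s : Finset ι) (hs : IsLowerSet (s : Set ι)) :
    μ.real (⋂ j ∈ s, (A j)ᶜ) ≤ ∏ j ∈ s, μ.real (A j)ᶜ + φ * (1 - ∏ j ∈ s, μ.real (A j)ᶜ)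
      + ∑ i ∈ s, μ.real (A i ∩ V i) * ∏ k ∈ s with i < k, μ.real (A k)ᶜ := by
  classical
  induction s using Finset.induction_on_max with
  | empty => simp
  | insert a s hlt ih =>
    have hmem : ∀ j, j ∈ s ↔ j < a := fun j =>
      ⟨hlt j, fun hj => (mem_insert.1 (hs hj.le (mem_insert_self a s))).resolve_left hj.ne⟩
    have has : a ∉ s := fun h => (hlt a h).false
    have hs' : IsLowerSet (s : Set ι) := fun x y hyx hx => (hmem y).2 (hyx.trans_lt (hlt x hx))
    have hC : MeasurableSet (⋂ j ∈ s, (A j)ᶜ) := s.measurableSet_biInter fun j _ => (hA j).compl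
    have hCc : (⋂ j ∈ s, (A j)ᶜ)ᶜ = U a ∪ V a := by
      simp only [Set.compl_iInter, compl_compl, hmem, hUV]
    have hstep := measureReal_inter_compl_le (hA a) hC hCc (hmix a)
    have hfilter_a : ({k ∈ insert a s | a < k} : Finset ι) = ∅ := by
      rw [filter_insert, if_neg (lt_irrefl a)]
      exact filter_false_of_mem fun k hk => (hlt k hk).not_gt
    have hfilter_lt : ∀ i ∈ s, {k ∈ insert a s | i < k} = insert a {k ∈ s | i < k} :=
      fun i hi => by rw [filter_insert, if_pos (hlt i hi)]
    have hq : 0 ≤ μ.real (A a)ᶜ := measureReal_nonneg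
    have hih := mul_le_mul_of_nonneg_left (ih hs') hq
    rw [Finset.set_biInter_insert, Set.inter_comm, prod_insert has, sum_insert has, hfilter_a,
      prod_empty, mul_one, sum_congr rfl fun i hi => by
        rw [hfilter_lt i hi, prod_insert fun h => has (mem_filter.1 h).1, mul_left_comm],
      ← mul_sum]
    rw [probReal_compl_eq_one_sub (hA a)] at hstep hih ⊢
    linarith

end MeasureTheory

theorem stmt_0_general {Ω : Type*} [MeasurableSpace Ω] (μ : Measure Ω) [IsProbabilityMeasure μ]
    (d : ℕ) (A : Fin d → Set Ω) (hmeas : ∀ i, MeasurableSet (A i))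
    (D : Fin d → Finset (Fin d))
    (φ : ℝ)
    (hmix : ∀ i : Fin d,
      (μ ((⋃ j ∈ {j : Fin d | j < i ∧ j ∉ D i}, A j) ∩ A i)).toReal / (μ (A i)).toReal
        - (μ (⋃ j ∈ {j : Fin d | j < i ∧ j ∉ D i}, A j)).toReal ≤ φ) :
    (μ (⋂ i, (A i)ᶜ)).toReal ≤
      (∏ i, (μ (A i)ᶜ).toReal)
      + φ * (1 - ∏ i, (μ (A i)ᶜ).toReal)
      + ∑ i, (μ (A i ∩ ⋃ j ∈ {j : Fin d | j < i ∧ j ∈ D i}, A j)).toReal *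
          ∏ k ∈ Finset.univ.filter (fun k => i < k), (μ (A k)ᶜ).toReal := by
  have hsplit : ∀ i, ⋃ j < i, A j =
      (⋃ j ∈ {j : Fin d | j < i ∧ j ∉ D i}, A j) ∪ ⋃ j ∈ {j : Fin d | j < i ∧ j ∈ D i}, A j := by
    intro i
    ext x
    simp only [Set.mem_iUnion, Set.mem_union, Set.mem_ofPred_eq, exists_prop]
    grind
  have := measureReal_biInter_compl_le hmeas hsplit
    (fun i => measureReal_inter_le_of_div_sub_le (hmix i)) univ (by simp [isLowerSet_univ])
  simp only [mem_univ, Set.iInter_true] at this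
  exact this

/-- Upper bound for the probability that none of the events occurs. -/
theorem stmt_0 {Ω : Type*} [MeasurableSpace Ω] (μ : Measure Ω) [IsProbabilityMeasure μ]
    (d : ℕ) (A : Fin d → Set Ω) (hmeas : ∀ i, MeasurableSet (A i))
    (hpos : ∀ i, 0 < (μ (A i)).toReal)
    (D : Fin d → Finset (Fin d)) (hD : ∀ i, i ∉ D i)
    (φ : ℝ) (hφ : 0 ≤ φ)
    (hmix : ∀ i : Fin d,
      (μ ((⋃ j ∈ {j : Fin d | j < i ∧ j ∉ D i}, A j) ∩ A i)).toReal / (μ (A i)).toReal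
        - (μ (⋃ j ∈ {j : Fin d | j < i ∧ j ∉ D i}, A j)).toReal ≤ φ) :
    (μ (⋂ i, (A i)ᶜ)).toReal ≤
      (∏ i, (μ (A i)ᶜ).toReal)
      + φ * (1 - ∏ i, (μ (A i)ᶜ).toReal)
      + ∑ i, (μ (A i ∩ ⋃ j ∈ {j : Fin d | j < i ∧ j ∈ D i}, A j)).toReal *
          ∏ k ∈ Finset.univ.filter (fun k => i < k), (μ (A k)ᶜ).toReal :=
  stmt_0_general μ d A hmeas D φ hmix
end

section
/- For any finite system of events (A_i)_{i∈[d]} with nonzero probabilities, sets D_i ⊆ [d]\{i}, and φ ≥ 0 such that P(⋃_{j∈[i-1]\D_i} A_j) − P(⋃_{j∈[i-1]\D_i} A_j | A_i) ≤ φ for all i ∈ [d], we have P(⋂_{i∈[d]} Ā_i) ≥ ∏_{i∈[d]} P(Ā_i) − φ(1 − ∏_{i∈[d]} P(Ā_i)) − Δ₂, where Δ₂ = Σ_{i∈[d]} P(A_i) P(⋃_{j∈[i-1]∩D_i} A_j) ∏_{k∈[d]\[i]} P(Ā_k). -/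
open MeasureTheory Finset

/-- Generalised Dubickas inequality: lower bound for the probability that none of
the events occurs. -/
theorem stmt_1 {Ω : Type*} [MeasurableSpace Ω] (μ : Measure Ω) [IsProbabilityMeasure μ]
    (d : ℕ) (A : Fin d → Set Ω) (hmeas : ∀ i, MeasurableSet (A i))
    (hpos : ∀ i, 0 < (μ (A i)).toReal)
    (D : Fin d → Finset (Fin d)) (hD : ∀ i, i ∉ D i)
    (φ : ℝ) (hφ : 0 ≤ φ)
    (hmix : ∀ i : Fin d,
      (μ (⋃ j ∈ {j : Fin d | j < i ∧ j ∉ D i}, A j)).toReal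
        - (μ ((⋃ j ∈ {j : Fin d | j < i ∧ j ∉ D i}, A j) ∩ A i)).toReal / (μ (A i)).toReal
          ≤ φ) :
    (μ (⋂ i, (A i)ᶜ)).toReal ≥
      (∏ i, (μ (A i)ᶜ).toReal)
      - φ * (1 - ∏ i, (μ (A i)ᶜ).toReal)
      - ∑ i, (μ (A i)).toReal * (μ (⋃ j ∈ {j : Fin d | j < i ∧ j ∈ D i}, A j)).toReal *
          ∏ k ∈ Finset.univ.filter (fun k => i < k), (μ (A k)ᶜ).toReal := by
  -- abbreviations
  set p : Fin d → ℝ := fun i => (μ (A i)).toReal with hp_def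
  set q : Fin d → ℝ := fun i => (μ (A i)ᶜ).toReal with hq_def
  have hcompl : ∀ s : Set Ω, MeasurableSet s → (μ sᶜ).toReal = 1 - (μ s).toReal := by
    intro s hs
    rw [prob_compl_eq_one_sub hs, ENNReal.toReal_sub_of_le prob_le_one ENNReal.one_ne_top,
      ENNReal.toReal_one]
  have hq1 : ∀ i, q i = 1 - p i := fun i => hcompl _ (hmeas i)
  have hp0 : ∀ i, 0 ≤ p i := fun i => ENNReal.toReal_nonneg
  have hq0 : ∀ i, 0 ≤ q i := fun i => ENNReal.toReal_nonneg
  -- the partial unions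
  set U : ℕ → Set Ω := fun n =>
    ⋃ j ∈ Finset.filter (fun j : Fin d => (j : ℕ) < n) Finset.univ, A j with hU_def
  have hUmeas : ∀ n, MeasurableSet (U n) :=
    fun n => Finset.measurableSet_biUnion _ (fun j _ => hmeas j)
  set e : Fin d → ℝ := fun i =>
    (μ (⋃ j ∈ {j : Fin d | j < i ∧ j ∈ D i}, A j)).toReal with he_def
  have he0 : ∀ i, 0 ≤ e i := fun i => ENNReal.toReal_nonneg
  set s : ℕ → ℝ := fun n => 1 - (μ (U n)).toReal with hs_def
  -- key recursive inequality
  have key : ∀ i : Fin d, s ((i : ℕ) + 1) ≥ q i * s (i : ℕ) - p i * e i - p i * φ := by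
    intro i
    set C : Set Ω := ⋃ j ∈ {j : Fin d | j < i ∧ j ∉ D i}, A j with hC_def
    set E : Set Ω := ⋃ j ∈ {j : Fin d | j < i ∧ j ∈ D i}, A j with hE_def
    have hCmeas : MeasurableSet C :=
      MeasurableSet.biUnion (Set.to_countable _) (fun j _ => hmeas j)
    have hUsucc : U ((i : ℕ) + 1) = U (i : ℕ) ∪ A i := by
      ext x
      simp only [hU_def, Set.mem_iUnion, Finset.mem_filter, Finset.mem_univ, true_and,
        Set.mem_union, exists_prop]
      constructor
      · rintro ⟨j, hj, hx⟩
        rcases Nat.lt_succ_iff_lt_or_eq.mp hj with h | h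
        · exact Or.inl ⟨j, h, hx⟩
        · exact Or.inr (by rwa [show j = i from Fin.ext h] at hx)
      · rintro (⟨j, hj, hx⟩ | hx)
        · exact ⟨j, Nat.lt_succ_of_lt hj, hx⟩
        · exact ⟨i, Nat.lt_succ_self _, hx⟩
    -- inclusion-exclusion in real form
    have hIE : (μ (U (i : ℕ) ∪ A i)).toReal + (μ (U (i : ℕ) ∩ A i)).toReal
        = (μ (U (i : ℕ))).toReal + p i := by
      have := measure_union_add_inter (μ := μ) (U (i : ℕ)) (hmeas i)
      have h2 := congrArg ENNReal.toReal this
      rwa [ENNReal.toReal_add (measure_ne_top μ _) (measure_ne_top μ _),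
        ENNReal.toReal_add (measure_ne_top μ _) (measure_ne_top μ _)] at h2
    -- C ⊆ U i
    have hCU : C ⊆ U (i : ℕ) := by
      refine Set.iUnion₂_subset fun j hj => ?_
      intro x hx
      simp only [hU_def, Set.mem_iUnion, Finset.mem_filter, Finset.mem_univ, true_and,
        exists_prop]
      exact ⟨j, hj.1, hx⟩
    have hmono : (μ (C ∩ A i)).toReal ≤ (μ (U (i : ℕ) ∩ A i)).toReal :=
      ENNReal.toReal_mono (measure_ne_top μ _)
        (measure_mono (Set.inter_subset_inter_left _ hCU))
    -- U i ⊆ C ∪ E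
    have hUCE : (μ (U (i : ℕ))).toReal ≤ (μ C).toReal + e i := by
      have hsub : U (i : ℕ) ⊆ C ∪ E := by
        intro x hx
        simp only [hU_def, Set.mem_iUnion, Finset.mem_filter, Finset.mem_univ, true_and,
          exists_prop] at hx
        obtain ⟨j, hj, hx⟩ := hx
        by_cases hjD : j ∈ D i
        · exact Or.inr (Set.mem_biUnion ⟨Fin.lt_def.mpr hj, hjD⟩ hx)
        · exact Or.inl (Set.mem_biUnion ⟨Fin.lt_def.mpr hj, hjD⟩ hx)
      calc (μ (U (i : ℕ))).toReal ≤ (μ (C ∪ E)).toReal :=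
            ENNReal.toReal_mono (measure_ne_top μ _) (measure_mono hsub)
        _ ≤ (μ C).toReal + e i := by
            have := measure_union_le (μ := μ) C E
            have h2 := ENNReal.toReal_mono (by
              exact ENNReal.add_ne_top.mpr ⟨measure_ne_top μ _, measure_ne_top μ _⟩) this
            rwa [ENNReal.toReal_add (measure_ne_top μ _) (measure_ne_top μ _)] at h2
    -- mixing condition rearranged
    have hmix' : (μ (C ∩ A i)).toReal ≥ p i * (μ C).toReal - p i * φ := by
      have h : (μ C).toReal - (μ (C ∩ A i)).toReal / p i ≤ φ := hmix i
      have hppos := hpos i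
      have h3 : (μ C).toReal - φ ≤ (μ (C ∩ A i)).toReal / p i := by linarith
      have h4 := (le_div_iff₀ hppos).mp h3
      nlinarith [h4]
    have hgoal : 1 - (μ (U ((i : ℕ) + 1))).toReal
        ≥ q i * (1 - (μ (U (i : ℕ))).toReal) - p i * e i - p i * φ := by
      rw [hUsucc, hq1 i]
      nlinarith [hp0 i, hUCE, hmono, hmix', hIE, ENNReal.toReal_nonneg (a := μ (U (i : ℕ) ∩ A i))]
    exact hgoal
  -- main induction
  have main : ∀ n, n ≤ d → s n ≥
      (∏ j ∈ Finset.filter (fun j : Fin d => (j : ℕ) < n) Finset.univ, q j)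
      - φ * (1 - ∏ j ∈ Finset.filter (fun j : Fin d => (j : ℕ) < n) Finset.univ, q j)
      - ∑ j ∈ Finset.filter (fun j : Fin d => (j : ℕ) < n) Finset.univ, p j * e j *
          ∏ k ∈ Finset.filter (fun k : Fin d => j < k ∧ (k : ℕ) < n) Finset.univ, q k := by
    intro n
    induction n with
    | zero =>
      intro _
      have hU0 : U 0 = ∅ := by
        simp [hU_def]
      have hf0 : Finset.filter (fun j : Fin d => (j : ℕ) < 0) Finset.univ = ∅ := by
        simp
      simp [hs_def, hU0, hf0]
    | succ n ih =>
      intro hn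
      have hnd : n < d := hn
      set i : Fin d := ⟨n, hnd⟩ with hi_def
      have hfilter : Finset.filter (fun j : Fin d => (j : ℕ) < n + 1) Finset.univ
          = insert i (Finset.filter (fun j : Fin d => (j : ℕ) < n) Finset.univ) := by
        ext j
        simp only [Finset.mem_filter, Finset.mem_univ, true_and, Finset.mem_insert, Fin.ext_iff,
          hi_def]
        omega
      have hinot : i ∉ Finset.filter (fun j : Fin d => (j : ℕ) < n) Finset.univ := by
        simp [hi_def]
      have hprod : ∏ j ∈ Finset.filter (fun j : Fin d => (j : ℕ) < n + 1) Finset.univ, q j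
          = q i * ∏ j ∈ Finset.filter (fun j : Fin d => (j : ℕ) < n) Finset.univ, q j := by
        rw [hfilter, Finset.prod_insert hinot]
      have hsum : ∑ j ∈ Finset.filter (fun j : Fin d => (j : ℕ) < n + 1) Finset.univ, p j * e j *
            ∏ k ∈ Finset.filter (fun k : Fin d => j < k ∧ (k : ℕ) < n + 1) Finset.univ, q k
          = p i * e i + q i * ∑ j ∈ Finset.filter (fun j : Fin d => (j : ℕ) < n) Finset.univ,
              p j * e j *
              ∏ k ∈ Finset.filter (fun k : Fin d => j < k ∧ (k : ℕ) < n) Finset.univ, q k := by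
        rw [hfilter, Finset.sum_insert hinot]
        have hempty : Finset.filter (fun k : Fin d => i < k ∧ (k : ℕ) < n + 1) Finset.univ
            = ∅ := by
          ext k
          simp only [Finset.mem_filter, Finset.mem_univ, true_and, Finset.notMem_empty,
            iff_false, not_and, Fin.lt_def, hi_def]
          omega
        rw [hempty]
        simp only [Finset.prod_empty, mul_one]
        congr 1
        rw [Finset.mul_sum]
        refine Finset.sum_congr rfl fun j hj => ?_
        simp only [Finset.mem_filter, Finset.mem_univ, true_and] at hj
        have hins : Finset.filter (fun k : Fin d => j < k ∧ (k : ℕ) < n + 1) Finset.univ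
            = insert i (Finset.filter (fun k : Fin d => j < k ∧ (k : ℕ) < n) Finset.univ) := by
          ext k
          simp only [Finset.mem_filter, Finset.mem_univ, true_and, Finset.mem_insert,
            Fin.ext_iff, Fin.lt_def, hi_def]
          omega
        have hinot2 : i ∉ Finset.filter (fun k : Fin d => j < k ∧ (k : ℕ) < n) Finset.univ := by
          simp [hi_def]
        rw [hins, Finset.prod_insert hinot2]
        ring
      have hkey := key i
      have hsn : s ((i : ℕ) + 1) = s (n + 1) := by rw [hi_def]
      have hih := ih (Nat.le_of_succ_le hn)
      have hmul := mul_le_mul_of_nonneg_left hih (hq0 i)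
      rw [hprod, hsum]
      have hqp := hq1 i
      nlinarith [hkey, hmul, hφ, hq0 i, hp0 i]
  -- conclusion
  have hfin := main d le_rfl
  have hfu : Finset.filter (fun j : Fin d => (j : ℕ) < d) Finset.univ = Finset.univ := by
    ext j; simp [j.isLt]
  have hUd : (⋂ i, (A i)ᶜ) = (U d)ᶜ := by
    rw [← Set.compl_iUnion]
    congr 1
    ext x
    simp [hU_def, Set.mem_iUnion, Fin.isLt]
  rw [hUd, hcompl _ (hUmeas d)]
  rw [hfu] at hfin
  have hfix : ∀ j : Fin d,
      Finset.filter (fun k : Fin d => j < k ∧ (k : ℕ) < d) Finset.univ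
      = Finset.filter (fun k : Fin d => j < k) Finset.univ := by
    intro j; ext k; simp [k.isLt]
  calc 1 - (μ (U d)).toReal = s d := rfl
    _ ≥ _ := by
      refine le_trans (le_of_eq ?_) hfin
      congr 1
      refine Finset.sum_congr rfl fun j _ => ?_
      rw [hfix j]
end

section
/- If (A_i)_{i∈[d]} are events with nonzero probabilities and sets D_i ⊆ [d]\{i} are such that for each i the event A_i is independent of the event ⋃_{j∈[i-1]\D_i} A_j, then P(⋂_{i∈[d]} Ā_i) ≥ ∏_{i∈[d]} P(Ā_i) − Σ_{i∈[d]} P(A_i) P(⋃_{j∈[i-1]∩D_i} A_j) ∏_{k∈[d]\[i]} P(Ā_k). -/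
open MeasureTheory Finset

lemma dubickas_key {Ω : Type*} [MeasurableSpace Ω] (μ : Measure Ω) [IsProbabilityMeasure μ]
    (Ai U V T : Set Ω) (hAi : MeasurableSet Ai) (hU : MeasurableSet U)
    (hind : (μ (Ai ∩ U)).toReal = (μ Ai).toReal * (μ U).toReal)
    (hTU : T ⊆ Uᶜ) (hUc : Uᶜ ⊆ T ∪ V) :
    (μ (T ∩ Aiᶜ)).toReal ≥ (μ Aiᶜ).toReal * (μ T).toReal - (μ Ai).toReal * (μ V).toReal := by
  have hne : ∀ s : Set Ω, μ s ≠ ⊤ := fun s => measure_ne_top μ s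
  have h1 : (μ (T ∩ Ai)).toReal + (μ (T ∩ Aiᶜ)).toReal = (μ T).toReal := by
    rw [← Set.diff_eq, ← ENNReal.toReal_add (hne _) (hne _), measure_inter_add_diff T hAi]
  have h3 : (μ (Ai ∩ U)).toReal + (μ (Ai ∩ Uᶜ)).toReal = (μ Ai).toReal := by
    rw [← Set.diff_eq, ← ENNReal.toReal_add (hne _) (hne _), measure_inter_add_diff Ai hU]
  have h2 : (μ (T ∩ Ai)).toReal ≤ (μ (Ai ∩ Uᶜ)).toReal := by
    refine ENNReal.toReal_mono (hne _) (measure_mono ?_)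
    exact fun ω hω => ⟨hω.2, hTU hω.1⟩
  have hcomp : ∀ s : Set Ω, MeasurableSet s → (μ sᶜ).toReal = 1 - (μ s).toReal := by
    intro s hs
    rw [measure_compl hs (hne s), measure_univ,
      ENNReal.toReal_sub_of_le prob_le_one (by simp), ENNReal.toReal_one]
  have h4 : 1 - (μ U).toReal ≤ (μ T).toReal + (μ V).toReal := by
    rw [← hcomp U hU, ← ENNReal.toReal_add (hne _) (hne _)]
    exact ENNReal.toReal_mono (by simp [hne]) ((measure_mono hUc).trans (measure_union_le T V))
  have h5 := hcomp Ai hAi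
  have ha : 0 ≤ (μ Ai).toReal := ENNReal.toReal_nonneg
  rw [ge_iff_le, h5]; nlinarith [mul_le_mul_of_nonneg_left h4 ha]

/-- Dubickas inequality (the φ = 0 case): if each A_i is independent of the union of
the weakly dependent preceding events, then a lower bound holds. -/
theorem stmt_3 {Ω : Type*} [MeasurableSpace Ω] (μ : Measure Ω) [IsProbabilityMeasure μ]
    (d : ℕ) (A : Fin d → Set Ω) (hmeas : ∀ i, MeasurableSet (A i))
    (hpos : ∀ i, 0 < (μ (A i)).toReal)
    (D : Fin d → Finset (Fin d)) (hD : ∀ i, i ∉ D i)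
    (hindep : ∀ i : Fin d,
      (μ (A i ∩ ⋃ j ∈ {j : Fin d | j < i ∧ j ∉ D i}, A j)).toReal =
        (μ (A i)).toReal * (μ (⋃ j ∈ {j : Fin d | j < i ∧ j ∉ D i}, A j)).toReal) :
    (μ (⋂ i, (A i)ᶜ)).toReal ≥
      (∏ i, (μ (A i)ᶜ).toReal)
      - ∑ i, (μ (A i)).toReal * (μ (⋃ j ∈ {j : Fin d | j < i ∧ j ∈ D i}, A j)).toReal *
          ∏ k ∈ Finset.univ.filter (fun k => i < k), (μ (A k)ᶜ).toReal := by
  have claim : ∀ n : ℕ, n ≤ d →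
      (μ (⋂ j ∈ {j : Fin d | (j : ℕ) < n}, (A j)ᶜ)).toReal ≥
        (∏ i ∈ Finset.univ.filter (fun i : Fin d => (i : ℕ) < n), (μ (A i)ᶜ).toReal)
        - ∑ i ∈ Finset.univ.filter (fun i : Fin d => (i : ℕ) < n),
            (μ (A i)).toReal * (μ (⋃ j ∈ {j : Fin d | j < i ∧ j ∈ D i}, A j)).toReal *
              ∏ k ∈ Finset.univ.filter (fun k => i < k ∧ (k : ℕ) < n), (μ (A k)ᶜ).toReal := by
    intro n
    induction n with
    | zero =>
      intro _
      simp
    | succ n ih =>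
      intro hle
      have hn : n < d := hle
      have IH := ih (Nat.le_of_succ_le hle)
      set i : Fin d := ⟨n, hn⟩ with hi
      set T : Set Ω := ⋂ j ∈ {j : Fin d | (j : ℕ) < n}, (A j)ᶜ with hT
      set U : Set Ω := ⋃ j ∈ {j : Fin d | j < i ∧ j ∉ D i}, A j with hUdef
      set V : Set Ω := ⋃ j ∈ {j : Fin d | j < i ∧ j ∈ D i}, A j with hVdef
      have hset : {j : Fin d | (j : ℕ) < n + 1} = insert i {j : Fin d | (j : ℕ) < n} := by
        ext j
        simp only [Set.mem_setOf_eq, Set.mem_insert_iff, Fin.ext_iff, hi]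
        omega
      have hSeq : (⋂ j ∈ {j : Fin d | (j : ℕ) < n + 1}, (A j)ᶜ) = T ∩ (A i)ᶜ := by
        rw [hset, Set.biInter_insert, Set.inter_comm]
      have hUmeas : MeasurableSet U :=
        MeasurableSet.biUnion (Set.to_countable _) (fun j _ => hmeas j)
      have hTU : T ⊆ Uᶜ := by
        intro ω hω hmem
        simp only [hUdef, Set.mem_iUnion, Set.mem_setOf_eq] at hmem
        obtain ⟨j, ⟨hji, _⟩, hωj⟩ := hmem
        have hjn : (j : ℕ) < n := hji
        have := Set.mem_iInter₂.mp hω j hjn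
        exact this hωj
      have hUc : Uᶜ ⊆ T ∪ V := by
        intro ω hω
        by_cases hv : ω ∈ V
        · exact Or.inr hv
        · left
          refine Set.mem_iInter₂.mpr ?_
          intro j hjn hωj
          have hji : j < i := hjn
          by_cases hjD : j ∈ D i
          · exact hv (Set.mem_biUnion ⟨hji, hjD⟩ hωj)
          · exact hω (Set.mem_biUnion ⟨hji, hjD⟩ hωj)
      have key := dubickas_key μ (A i) U V T (hmeas i) hUmeas (hindep i) hTU hUc
      rw [hSeq]
      have hfil : Finset.univ.filter (fun j : Fin d => (j : ℕ) < n + 1)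
          = insert i (Finset.univ.filter (fun j : Fin d => (j : ℕ) < n)) := by
        ext j
        simp only [Finset.mem_filter, Finset.mem_univ, true_and, Finset.mem_insert,
          Fin.ext_iff, hi]
        omega
      have hinot : i ∉ Finset.univ.filter (fun j : Fin d => (j : ℕ) < n) := by
        simp [hi]
      have hprodi : Finset.univ.filter (fun k : Fin d => i < k ∧ (k : ℕ) < n + 1) = ∅ := by
        ext k
        simp only [Finset.mem_filter, Finset.mem_univ, true_and, Finset.notMem_empty,
          iff_false, not_and, Fin.lt_def, hi]
        omega
      have hsum : ∀ j ∈ Finset.univ.filter (fun j : Fin d => (j : ℕ) < n),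
          (∏ k ∈ Finset.univ.filter (fun k => j < k ∧ (k : ℕ) < n + 1), (μ (A k)ᶜ).toReal)
            = (μ (A i)ᶜ).toReal *
              ∏ k ∈ Finset.univ.filter (fun k => j < k ∧ (k : ℕ) < n), (μ (A k)ᶜ).toReal := by
        intro j hj
        simp only [Finset.mem_filter, Finset.mem_univ, true_and] at hj
        have hfil2 : Finset.univ.filter (fun k : Fin d => j < k ∧ (k : ℕ) < n + 1)
            = insert i (Finset.univ.filter (fun k : Fin d => j < k ∧ (k : ℕ) < n)) := by
          ext k
          simp only [Finset.mem_filter, Finset.mem_univ, true_and, Finset.mem_insert,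
            Fin.ext_iff, Fin.lt_def, hi]
          omega
        have hinot2 : i ∉ Finset.univ.filter (fun k : Fin d => j < k ∧ (k : ℕ) < n) := by
          simp [hi]
        rw [hfil2, Finset.prod_insert hinot2]
      rw [hfil, Finset.prod_insert hinot, Finset.sum_insert hinot, hprodi,
        Finset.sum_congr rfl (fun j hj => by rw [hsum j hj])]
      have hq : 0 ≤ (μ (A i)ᶜ).toReal := ENNReal.toReal_nonneg
      have hv : 0 ≤ (μ (A i)).toReal * (μ V).toReal :=
        mul_nonneg ENNReal.toReal_nonneg ENNReal.toReal_nonneg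
      have expand : ∑ j ∈ Finset.univ.filter (fun j : Fin d => (j : ℕ) < n),
          (μ (A j)).toReal * (μ (⋃ l ∈ {l : Fin d | l < j ∧ l ∈ D j}, A l)).toReal *
            ((μ (A i)ᶜ).toReal *
              ∏ k ∈ Finset.univ.filter (fun k => j < k ∧ (k : ℕ) < n), (μ (A k)ᶜ).toReal)
          = (μ (A i)ᶜ).toReal * ∑ j ∈ Finset.univ.filter (fun j : Fin d => (j : ℕ) < n),
              (μ (A j)).toReal * (μ (⋃ l ∈ {l : Fin d | l < j ∧ l ∈ D j}, A l)).toReal *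
                ∏ k ∈ Finset.univ.filter (fun k => j < k ∧ (k : ℕ) < n), (μ (A k)ᶜ).toReal := by
        rw [Finset.mul_sum]
        exact Finset.sum_congr rfl (fun j _ => by ring)
      rw [expand]
      have hmul := mul_le_mul_of_nonneg_left IH hq
      simp only [Finset.prod_empty, mul_one]
      nlinarith [key, hmul]
  have main := claim d le_rfl
  have h1 : (⋂ j ∈ {j : Fin d | (j : ℕ) < d}, (A j)ᶜ) = ⋂ i, (A i)ᶜ := by
    ext ω
    simp [Fin.is_lt]
  have h2 : Finset.univ.filter (fun j : Fin d => (j : ℕ) < d) = Finset.univ := by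
    ext j
    simp [j.is_lt]
  have h3 : ∀ i : Fin d, Finset.univ.filter (fun k : Fin d => i < k ∧ (k : ℕ) < d)
      = Finset.univ.filter (fun k : Fin d => i < k) := by
    intro i
    ext k
    simp [k.is_lt]
  rw [h1, h2] at main
  simp only [h3] at main
  exact main
end
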